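/- Let f, f⋆ ∈ F with c_0(f) = c_0(f⋆), let {κ_i}_{i∈ℕ₊} := {κ_i(f)} = {κ_i(f⋆)} coincide and be setwise coprime, and suppose |c_{κ_i}(f)| = |c_{κ_i}(f⋆)| ≠ 0 for all i. Writing d_{k₁,…,k_p} := c_{−(k₁+⋯+k_p)}(f)·c_{k₁}(f)⋯c_{k_p}(f) and d⋆_{k₁,…,k_p} := c_{−(k₁+⋯+k_p)}(f⋆)·c_{k₁}(f⋆)⋯c_{k_p}(f⋆), assume d_{k₁,…,k_p} = d⋆_{k₁,…,k_p} for all p ≥ 1 and all (k₁,…,k_p) ∈ ℤ^p. Then there exists θ ∈ [0,2π) such that c_{−k}(f) = c_{−k}(f⋆) e^{−ikθ} for all k ∈ ℤ, i.e. f(x−θ) = f⋆(x) for all x ∈ ℝ. -/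

import Mathlib

open Real Set

noncomputable section

/-- The `k`-th Fourier coefficient `c_k(f) = (1/(2π)) ∫_{-π}^{π} f(x) e^{-ikx} dx`. -/
def fc (f : ℝ → ℝ) (k : ℤ) : ℂ :=
  (1 / (2 * (π : ℂ))) *
    ∫ x in (-π : ℝ)..π, (f x : ℂ) * Complex.exp (-Complex.I * (k : ℂ) * (x : ℂ))

/-- The class `F` of oscillation patterns: 2π-periodic functions with square-summable
Fourier coefficients which represent the function. -/
def IsOscPattern (f : ℝ → ℝ) : Prop :=
  (∀ x : ℝ, f (x + 2 * π) = f x) ∧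
  Summable (fun k : ℤ => ‖fc f k‖ ^ 2) ∧
  ∀ x : ℝ, (f x : ℂ) = ∑' k : ℤ, fc f k * Complex.exp (Complex.I * (k : ℂ) * (x : ℂ))

/-!
Write `u k = c_k(f) / c_k(f⋆)`. The order-one invariants are `|c_k|²`, so `u k` is a unit
wherever `c_k(f) ≠ 0`. For a multiset `M` of such indices whose sum `s` again has `c_s(f) ≠ 0`,
the invariant indexed by `M` gives `∏_{m ∈ M} u m = u s`. The support is symmetric, so coprimality
writes `1` as a sum of a multiset `L` of support indices; with `ζ = ∏_{m ∈ L} u m` this gives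
`u k = ζ ^ k` on the support, and `ζ = e^{iθ}` is the phase shift.
-/

open ComplexConjugate

/-- The paper's `d_{k₁,…,k_p}` for `M = {k₁,…,k_p}`; the empty multiset gives `c₀`. -/
def polyspectrum (c : ℤ → ℂ) (M : Multiset ℤ) : ℂ :=
  c (-M.sum) * (M.map c).prod

lemma fc_neg (f : ℝ → ℝ) (k : ℤ) : fc f (-k) = conj (fc f k) := by
  have intervalIntegral_conj : ∀ g : ℝ → ℂ,
      ∫ x in (-π : ℝ)..π, conj (g x) = conj (∫ x in (-π : ℝ)..π, g x) := fun g => by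
    simp only [intervalIntegral, ← integral_conj, map_sub]
  rw [fc, fc, map_mul, ← intervalIntegral_conj]
  congr 1
  · simp [map_ofNat]
  · refine intervalIntegral.integral_congr fun x _ => ?_
    simp only [map_mul, Complex.conj_ofReal, ← Complex.exp_conj, map_neg, Complex.conj_I,
      map_intCast]
    push_cast
    ring_nf

section Polyspectrum

variable {c c' : ℤ → ℂ}

lemma polyspectrum_eq_of_forall_fin
    (h : ∀ p : ℕ, ∀ k : Fin p → ℤ,
      c (-(∑ j, k j)) * ∏ j, c (k j) = c' (-(∑ j, k j)) * ∏ j, c' (k j)) :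
    polyspectrum c = polyspectrum c' := by
  funext M
  simpa [polyspectrum, List.sum_ofFn, List.prod_ofFn] using h M.toList.length M.toList.get

variable (hc : ∀ k, c (-k) = conj (c k)) (hc' : ∀ k, c' (-k) = conj (c' k))
  (h : polyspectrum c = polyspectrum c')
include hc hc' h

lemma norm_eq_of_polyspectrum_eq (k : ℤ) : ‖c k‖ = ‖c' k‖ := by
  have hk := congrFun h {k}
  simp only [polyspectrum, Multiset.sum_singleton, Multiset.map_singleton,
    Multiset.prod_singleton, hc, hc', Complex.conj_mul'] at hk
  exact (sq_eq_sq₀ (norm_nonneg _) (norm_nonneg _)).1 (by exact_mod_cast hk)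

lemma ne_zero_of_polyspectrum_eq {k : ℤ} (hk : c k ≠ 0) : c' k ≠ 0 := by
  rwa [← norm_ne_zero_iff, ← norm_eq_of_polyspectrum_eq hc hc' h, norm_ne_zero_iff]

lemma norm_div_of_polyspectrum_eq {k : ℤ} (hk : c k ≠ 0) : ‖c k / c' k‖ = 1 := by
  rw [norm_div, ← norm_eq_of_polyspectrum_eq hc hc' h, div_self (norm_ne_zero_iff.2 hk)]

lemma div_neg_of_polyspectrum_eq {k : ℤ} (hk : c k ≠ 0) :
    c (-k) / c' (-k) = (c k / c' k)⁻¹ := by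
  rw [hc, hc', ← map_div₀, Complex.inv_eq_conj (norm_div_of_polyspectrum_eq hc hc' h hk)]

lemma prod_map_div_of_polyspectrum_eq {M : Multiset ℤ} (hM : ∀ m ∈ M, c m ≠ 0)
    (hs : c M.sum ≠ 0) : (M.map fun m => c m / c' m).prod = c M.sum / c' M.sum := by
  have hprod := congrFun h M
  simp only [polyspectrum, hc, hc'] at hprod
  have hnorm : conj (c M.sum) * c M.sum = conj (c' M.sum) * c' M.sum := by
    simp only [Complex.conj_mul', norm_eq_of_polyspectrum_eq hc hc' h]
  have hM' : (M.map c').prod ≠ 0 := Multiset.prod_ne_zero fun h0 => by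
    obtain ⟨m, hm, hm0⟩ := Multiset.mem_map.1 h0
    exact ne_zero_of_polyspectrum_eq hc hc' h (hM m hm) hm0
  rw [Multiset.prod_map_div, div_eq_div_iff hM' (ne_zero_of_polyspectrum_eq hc hc' h hs)]
  refine mul_left_cancel₀ ((map_ne_zero (starRingEnd ℂ)).2 hs) ?_
  linear_combination c' M.sum * hprod - (M.map c').prod * hnorm

lemma div_eq_prod_pow_of_polyspectrum_eq {L : Multiset ℤ} (hL : ∀ m ∈ L, c m ≠ 0)
    (hL1 : L.sum = 1) {n : ℕ} (hn : c n ≠ 0) :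
    c n / c' n = (L.map fun m => c m / c' m).prod ^ n := by
  have hsum : (n • L).sum = n := by simp [Multiset.sum_nsmul, hL1]
  rw [← Multiset.prod_nsmul, ← Multiset.map_nsmul, prod_map_div_of_polyspectrum_eq hc hc' h,
    hsum]
  · exact fun m hm => hL m (Multiset.mem_of_mem_nsmul hm)
  · rwa [hsum]

lemma exists_norm_eq_one_forall_eq_mul_zpow
    (hgen : AddSubgroup.closure {k | c k ≠ 0} = ⊤) :
    ∃ ζ : ℂ, ‖ζ‖ = 1 ∧ ∀ k : ℤ, c k = c' k * ζ ^ k := by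
  set S := {k | c k ≠ 0}
  have hS : -S = S := by ext k; simp [S, hc]
  obtain ⟨L, hLS, hL1⟩ : ∃ L : Multiset ℤ, (∀ m ∈ L, m ∈ S) ∧ L.sum = 1 := by
    have hclosure := AddSubgroup.closure_toAddSubmonoid S
    rw [hS, union_self, hgen] at hclosure
    exact AddSubmonoid.exists_multiset_of_mem_closure (hclosure ▸ trivial)
  refine ⟨(L.map fun m => c m / c' m).prod, ?_, fun k => ?_⟩
  · refine Multiset.prod_induction (‖·‖ = 1) _ (fun a b ha hb => by rw [norm_mul, ha, hb, one_mul])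
      norm_one fun x hx => ?_
    obtain ⟨m, hm, rfl⟩ := Multiset.mem_map.1 hx
    exact norm_div_of_polyspectrum_eq hc hc' h (hLS m hm)
  by_cases hk : c k = 0
  · have hk' : c' k = 0 := by
      rwa [← norm_eq_zero, ← norm_eq_of_polyspectrum_eq hc hc' h, norm_eq_zero]
    rw [hk, hk', zero_mul]
  rw [mul_comm, ← div_eq_iff (ne_zero_of_polyspectrum_eq hc hc' h hk)]
  obtain ⟨n, rfl | rfl⟩ := Int.eq_nat_or_neg k
  · rw [zpow_natCast, div_eq_prod_pow_of_polyspectrum_eq hc hc' h hLS hL1 hk]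
  · have hn : c n ≠ 0 := by simpa [hc] using hk
    rw [div_neg_of_polyspectrum_eq hc hc' h hn,
      div_eq_prod_pow_of_polyspectrum_eq hc hc' h hLS hL1 hn, zpow_neg, zpow_natCast]

end Polyspectrum

lemma AddSubgroup.closure_natCast_eq_top {S : Set ℕ} (h : ∀ e : ℕ, (∀ k ∈ S, e ∣ k) → e = 1) :
    AddSubgroup.closure (((↑) : ℕ → ℤ) '' S) = ⊤ := by
  obtain ⟨a, ha⟩ := Int.subgroup_cyclic (AddSubgroup.closure (((↑) : ℕ → ℤ) '' S))
  have ha1 : a.natAbs = 1 := h _ fun k hk => by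
    have hka : (k : ℤ) ∈ AddSubgroup.closure {a} := ha ▸ AddSubgroup.subset_closure ⟨k, hk, rfl⟩
    rw [← AddSubgroup.zmultiples_eq_closure, Int.mem_zmultiples_iff] at hka
    exact Int.natAbs_dvd_natAbs.2 hka
  rw [ha, ← AddSubgroup.zmultiples_eq_closure, ← Int.zmultiples_natAbs, ha1, Nat.cast_one,
    Int.zmultiples_one]

lemma Complex.exists_mem_Ico_exp_mul_I_eq {z : ℂ} (hz : ‖z‖ = 1) :
    ∃ θ ∈ Ico 0 (2 * π), Complex.exp (θ * Complex.I) = z := by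
  obtain ⟨θ, rfl⟩ := (Complex.norm_eq_one_iff z).1 hz
  refine ⟨toIcoMod two_pi_pos 0 θ, toIcoMod_mem_Ico' _ _, ?_⟩
  rw [← self_sub_toIcoDiv_zsmul, Complex.ofReal_sub, Complex.ofReal_zsmul, Complex.ofReal_mul,
    Complex.ofReal_ofNat]
  exact Complex.exp_mul_I_periodic.sub_zsmul_eq _

lemma shift_eq_of_fc_eq_mul_exp {f g : ℝ → ℝ} (hf : IsOscPattern f) (hg : IsOscPattern g)
    {θ : ℝ} (h : ∀ k : ℤ, fc f k = fc g k * Complex.exp (Complex.I * k * θ)) (x : ℝ) :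
    f (x - θ) = g x := by
  suffices (f (x - θ) : ℂ) = g x by exact_mod_cast this
  rw [hf.2.2, hg.2.2]
  refine tsum_congr fun k => ?_
  rw [h, mul_assoc, ← Complex.exp_add]
  push_cast
  ring_nf

theorem phase_shift_identification_general
    (f fstar : ℝ → ℝ) (hf : IsOscPattern f) (hfstar : IsOscPattern fstar)
    (hc0 : fc f 0 = fc fstar 0)
    (hcoprime : ∀ e : ℕ, (∀ k : ℕ, 0 < k → fc f (k : ℤ) ≠ 0 → e ∣ k) → e = 1)
    (hd : ∀ p : ℕ, 1 ≤ p → ∀ k : Fin p → ℤ,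
      fc f (-(∑ j : Fin p, k j)) * ∏ j : Fin p, fc f (k j) =
      fc fstar (-(∑ j : Fin p, k j)) * ∏ j : Fin p, fc fstar (k j)) :
    ∃ θ : ℝ, θ ∈ Ico (0 : ℝ) (2 * π) ∧
      (∀ k : ℤ, fc f (-k) = fc fstar (-k) * Complex.exp (-Complex.I * (k : ℂ) * (θ : ℂ))) ∧
      ∀ x : ℝ, f (x - θ) = fstar x := by
  have hpoly : polyspectrum (fc f) = polyspectrum (fc fstar) := by
    refine polyspectrum_eq_of_forall_fin fun p => ?_
    rcases p.eq_zero_or_pos with rfl | hp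
    · simpa using hc0
    · exact hd p hp
  have hgen : AddSubgroup.closure {k | fc f k ≠ 0} = ⊤ := by
    refine eq_top_mono (AddSubgroup.closure_mono ?_)
      (AddSubgroup.closure_natCast_eq_top (S := {k | 0 < k ∧ fc f k ≠ 0})
        fun e he => hcoprime e fun k hk hne => he k ⟨hk, hne⟩)
    rintro _ ⟨k, ⟨_, hk⟩, rfl⟩
    exact hk
  obtain ⟨ζ, hζ, hcoef⟩ :=
    exists_norm_eq_one_forall_eq_mul_zpow (fc_neg f) (fc_neg fstar) hpoly hgen
  obtain ⟨θ, hθ, rfl⟩ := Complex.exists_mem_Ico_exp_mul_I_eq hζ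
  have hshift : ∀ k : ℤ, fc f k = fc fstar k * Complex.exp (Complex.I * k * θ) := fun k => by
    rw [hcoef, ← Complex.exp_int_mul]
    ring_nf
  refine ⟨θ, hθ, fun k => ?_, shift_eq_of_fc_eq_mul_exp hf hfstar hshift⟩
  rw [hshift]
  push_cast
  ring_nf

/-- If `f, f⋆ ∈ F` have `c_0(f) = c_0(f⋆)`, coinciding setwise coprime families of
positive indices with nonzero coefficients, equal moduli of the corresponding
coefficients, and equal products
`d_{k₁,…,k_p} = c_{−(k₁+⋯+k_p)} c_{k₁} ⋯ c_{k_p}` for all `p ≥ 1` and all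
`(k₁,…,k_p) ∈ ℤ^p`, then there exists `θ ∈ [0,2π)` with
`c_{−k}(f) = c_{−k}(f⋆) e^{−ikθ}` for all `k`, i.e. `f(x−θ) = f⋆(x)` for all `x`. -/
theorem phase_shift_identification
    (f fstar : ℝ → ℝ) (hf : IsOscPattern f) (hfstar : IsOscPattern fstar)
    (hc0 : fc f 0 = fc fstar 0)
    (hsupp : ∀ k : ℕ, 0 < k → (fc f (k : ℤ) ≠ 0 ↔ fc fstar (k : ℤ) ≠ 0))
    (hcoprime : ∀ e : ℕ, (∀ k : ℕ, 0 < k → fc f (k : ℤ) ≠ 0 → e ∣ k) → e = 1)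
    (hmod : ∀ k : ℕ, 0 < k → fc f (k : ℤ) ≠ 0 → ‖fc f (k : ℤ)‖ = ‖fc fstar (k : ℤ)‖)
    (hd : ∀ p : ℕ, 1 ≤ p → ∀ k : Fin p → ℤ,
      fc f (-(∑ j : Fin p, k j)) * ∏ j : Fin p, fc f (k j) =
      fc fstar (-(∑ j : Fin p, k j)) * ∏ j : Fin p, fc fstar (k j)) :
    ∃ θ : ℝ, θ ∈ Ico (0 : ℝ) (2 * π) ∧
      (∀ k : ℤ, fc f (-k) = fc fstar (-k) * Complex.exp (-Complex.I * (k : ℂ) * (θ : ℂ))) ∧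
      ∀ x : ℝ, f (x - θ) = fstar x :=
  phase_shift_identification_general f fstar hf hfstar hc0 hcoprime hd
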